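/- For all n ≥ 0 and all k ≥ 1, |I_n(3412, 4231, δ_{k+2})| = F_{k+1, n+1}, where δ_{k+2} = (k+2)(k+1)…21 is the decreasing permutation of length k+2, and F_{k,n} is the k-generalized Fibonacci number defined by F_{k,n} = 0 for n ≤ 0, F_{k,1} = 1, and F_{k,n} = Σ_{i=1}^{k} F_{k,n−i} for n ≥ 2. -/

import Mathlib

/-- `π` (a sequence of length `n` with values in `Fin n`) contains the pattern `σ` of length `k`:
there is a strictly increasing choice of positions on which `π` has the same pairwise
comparisons as `σ`. -/
def Contains {n k : ℕ} (π : Fin n → Fin n) (σ : Fin k → Fin k) : Prop :=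
  ∃ f : Fin k → Fin n, StrictMono f ∧ ∀ a b : Fin k, σ a < σ b ↔ π (f a) < π (f b)

/-- `π` avoids the pattern `σ`. -/
def Avoids {n k : ℕ} (π : Fin n → Fin n) (σ : Fin k → Fin k) : Prop :=
  ¬ Contains π σ

/-- The pattern 3412, written 0-indexed. -/
def pat3412 : Fin 4 → Fin 4 := ![2, 3, 0, 1]

/-- The pattern 4231, written 0-indexed. -/
def pat4231 : Fin 4 → Fin 4 := ![3, 1, 2, 0]

/-- The `k`-generalized Fibonacci numbers: `F_{k,0} = 0`, `F_{k,1} = 1`, and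
`F_{k,n} = Σ_{i=1}^k F_{k,n-i}` for `n ≥ 2` (terms with `n - i ≤ 0` contribute `0`). -/
def genFib (k : ℕ) : ℕ → ℕ
  | 0 => 0
  | 1 => 1
  | n + 2 => ∑ i ∈ (Finset.Icc 1 k).attach, genFib k (n + 2 - (i : ℕ))
decreasing_by
  have := Finset.mem_Icc.mp i.2
  omega

/-!
If `π` is an involution avoiding 3412 and 4231 and `m = π 0`, then `(0 m)` is a 2-cycle, an
entry above `m` in a position `0 < i < m` would give a 3412 with it, and an ascent inside
positions `0 < i < j < m` would give a 4231. So `π` decreases on `[0, m]`, i.e. it is the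
direct sum of the decreasing permutation `δ_{m+1}` and an involution `τ` of the same kind.
The three patterns are sum-indecomposable, so `δ_ℓ ⊕ τ` avoids them iff both summands do;
for `δ_ℓ` this means `ℓ ≤ k + 1`. The count `a_n` therefore satisfies
`a_n = Σ_{ℓ = 1}^{min(n, k+1)} a_{n-ℓ}`, the recurrence of `F_{k+1, n+1}`.
-/

open Function Finset

theorem Nat.card_eq_sum_card_fiberwise {α β : Type*} [Finite α] (f : α → β) {s : Finset β}
    (hf : ∀ a, f a ∈ s) : Nat.card α = ∑ b ∈ s, Nat.card {a // f a = b} := by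
  let g : α → s := fun a => ⟨f a, hf a⟩
  rw [Nat.card_congr (Equiv.sigmaFiberEquiv g).symm, Nat.card_sigma, ← Finset.sum_coe_sort s]
  exact Fintype.sum_congr _ _ fun b =>
    Nat.card_congr (Equiv.subtypeEquivRight fun a => Subtype.ext_iff)

theorem genFib_add_two (k n : ℕ) :
    genFib k (n + 2) = ∑ i ∈ Icc 1 k, genFib k (n + 2 - i) := by
  rw [genFib, Finset.sum_attach (Icc 1 k) fun i => genFib k (n + 2 - i)]

theorem genFib_succ_eq_sum_Icc_min {k n : ℕ} (hn : 0 < n) :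
    genFib k (n + 1) = ∑ i ∈ Icc 1 (min n k), genFib k (n + 1 - i) := by
  obtain ⟨m, rfl⟩ := Nat.exists_eq_add_one_of_ne_zero hn.ne'
  rw [genFib_add_two]
  refine (sum_subset (Icc_subset_Icc_right (min_le_right _ _)) fun i hi hi' => ?_).symm
  simp only [mem_Icc, le_min_iff, not_and_or, not_le] at hi hi'
  rw [show m + 2 - i = 0 by omega, genFib]

theorem exists_cut_of_monotone {q ℓ : ℕ} {g : Fin q → ℕ} (hg : Monotone g) {a₀ a₁ : Fin q}
    (h₀ : g a₀ < ℓ) (h₁ : ℓ ≤ g a₁) :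
    ∃ c : Fin q, 0 < (c : ℕ) ∧ (∀ a < c, g a < ℓ) ∧ ∀ b, c ≤ b → ℓ ≤ g b := by
  obtain ⟨c, hc⟩ := (Set.toFinite {a | ℓ ≤ g a}).exists_minimal ⟨a₁, h₁⟩
  have hc₀ : a₀ < c := lt_of_not_ge fun h => h₀.not_ge (hc.1.trans (hg h))
  exact ⟨c, (Nat.zero_le _).trans_lt hc₀,
    fun a hac => not_le.1 fun ha => (hc.2 ha hac.le).not_gt hac, fun b hcb => hc.1.trans (hg hcb)⟩

section Patterns

variable {n ℓ r q : ℕ} {π : Fin n → Fin n} {σ : Fin q → Fin q}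

theorem Contains.le (h : Contains π σ) : q ≤ n := by
  obtain ⟨f, hf, -⟩ := h
  exact Fin.le_of_injective f hf.injective

theorem Contains.strictAnti (h : Contains π σ) (hπ : StrictAnti π) : StrictAnti σ := by
  obtain ⟨f, hf, hfσ⟩ := h
  exact fun a b hab => (hfσ b a).2 (hπ (hf hab))

theorem contains_rev_of_strictAnti {f : Fin q → Fin n} (hf : StrictMono f)
    (hπf : StrictAnti (π ∘ f)) : Contains π (Fin.rev : Fin q → Fin q) :=
  ⟨f, hf, fun _ _ => Fin.rev_lt_rev.trans hπf.lt_iff_gt.symm⟩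

theorem contains_rev_rev_iff :
    Contains (Fin.rev : Fin ℓ → Fin ℓ) (Fin.rev : Fin q → Fin q) ↔ q ≤ ℓ :=
  ⟨Contains.le, fun h => contains_rev_of_strictAnti (Fin.strictMono_castLE h)
    (Fin.rev_strictAnti.comp_strictMono (Fin.strictMono_castLE h))⟩

theorem Contains.map {ρ : Fin ℓ → Fin ℓ} {e e' : Fin ℓ → Fin n} (he : StrictMono e)
    (he' : StrictMono e') (hπ : ∀ i, π (e i) = e' (ρ i)) (h : Contains ρ σ) :
    Contains π σ := by
  obtain ⟨g, hg, hgσ⟩ := h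
  exact ⟨e ∘ g, he.comp hg, fun a b => by simp only [comp_apply, hπ, he'.lt_iff_lt, hgσ]⟩

theorem contains_of_forall_mem_range {ρ : Fin ℓ → Fin ℓ} {e e' : Fin ℓ → Fin n}
    (he : StrictMono e) (he' : StrictMono e') (hπ : ∀ i, π (e i) = e' (ρ i))
    {f : Fin q → Fin n} (hf : StrictMono f) (hfσ : ∀ a b, σ a < σ b ↔ π (f a) < π (f b))
    (hfe : ∀ a, f a ∈ Set.range e) : Contains ρ σ := by
  choose g hg using hfe
  refine ⟨g, fun a b hab => he.lt_iff_lt.1 ?_, fun a b => ?_⟩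
  · rw [hg, hg]
    exact hf hab
  · rw [hfσ, ← hg a, ← hg b, hπ, hπ, he'.lt_iff_lt]

def SumIndecomposable (σ : Fin q → Fin q) : Prop :=
  ∀ c : Fin q, 0 < (c : ℕ) → ∃ a b, a < c ∧ c ≤ b ∧ σ b < σ a

theorem sumIndecomposable_rev : SumIndecomposable (Fin.rev : Fin q → Fin q) := by
  cases q with
  | zero => exact fun c => c.elim0
  | succ q =>
    exact fun c hc => ⟨0, Fin.last q, Fin.lt_def.2 hc, Fin.le_last c,
      Fin.rev_lt_rev.2 (Fin.lt_def.2 (hc.trans_le (Fin.le_last c)))⟩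

theorem sumIndecomposable_pat3412 : SumIndecomposable pat3412 := by
  unfold SumIndecomposable pat3412
  decide

theorem sumIndecomposable_pat4231 : SumIndecomposable pat4231 := by
  unfold SumIndecomposable pat4231
  decide

theorem not_strictAnti_pat3412 : ¬ StrictAnti pat3412 :=
  fun h => absurd (h (show (0 : Fin 4) < 1 by decide)) (by decide)

theorem not_strictAnti_pat4231 : ¬ StrictAnti pat4231 :=
  fun h => absurd (h (show (1 : Fin 4) < 2 by decide)) (by decide)

end Patterns

section DirectSum

variable {ℓ r q : ℕ} {ρ : Fin ℓ → Fin ℓ} {τ : Fin r → Fin r} {σ : Fin q → Fin q}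

def directSum (ρ : Fin ℓ → Fin ℓ) (τ : Fin r → Fin r) : Fin (ℓ + r) → Fin (ℓ + r) :=
  Fin.append (Fin.castAdd r ∘ ρ) (Fin.natAdd ℓ ∘ τ)

@[simp]
theorem directSum_castAdd (i : Fin ℓ) :
    directSum ρ τ (Fin.castAdd r i) = Fin.castAdd r (ρ i) :=
  Fin.append_left _ _ i

@[simp]
theorem directSum_natAdd (j : Fin r) :
    directSum ρ τ (Fin.natAdd ℓ j) = Fin.natAdd ℓ (τ j) :=
  Fin.append_right _ _ j

theorem val_directSum_lt_iff (i : Fin (ℓ + r)) :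
    (directSum ρ τ i : ℕ) < ℓ ↔ (i : ℕ) < ℓ := by
  induction i using Fin.addCases <;> simp

theorem involutive_directSum_iff :
    Involutive (directSum ρ τ) ↔ Involutive ρ ∧ Involutive τ := by
  refine ⟨fun h => ⟨fun i => ?_, fun j => ?_⟩, fun ⟨hρ, hτ⟩ i => ?_⟩
  · simpa using h (Fin.castAdd r i)
  · simpa using h (Fin.natAdd ℓ j)
  · induction i using Fin.addCases <;> simp [hρ _, hτ _]

theorem directSum_injective : Injective (directSum ρ : (Fin r → Fin r) → _) :=
  fun _ _ h => funext fun j => by simpa using congrFun h (Fin.natAdd ℓ j)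

theorem contains_directSum_iff (hσ : SumIndecomposable σ) :
    Contains (directSum ρ τ) σ ↔ Contains ρ σ ∨ Contains τ σ := by
  refine ⟨fun ⟨f, hf, hfσ⟩ => ?_, ?_⟩
  · by_cases hleft : ∀ a, (f a : ℕ) < ℓ
    · exact .inl <| contains_of_forall_mem_range (Fin.strictMono_castAdd r)
        (Fin.strictMono_castAdd r) directSum_castAdd hf hfσ
        fun a => ⟨_, Fin.castAdd_castLT r _ (hleft a)⟩
    by_cases hright : ∀ a, ℓ ≤ (f a : ℕ)
    · exact .inr <| contains_of_forall_mem_range (Fin.strictMono_natAdd ℓ)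
        (Fin.strictMono_natAdd ℓ) directSum_natAdd hf hfσ
        fun a => have := hright a
          ⟨⟨f a - ℓ, by omega⟩, Fin.ext (by simp only [Fin.natAdd_mk]; omega)⟩
    simp only [not_forall, not_lt, not_le] at hleft hright
    obtain ⟨a₁, ha₁⟩ := hleft
    obtain ⟨a₀, ha₀⟩ := hright
    obtain ⟨c, hc0, hbefore, hafter⟩ := exists_cut_of_monotone (fun _ _ h => hf.monotone h) ha₀ ha₁
    obtain ⟨a, b, hac, hcb, hba⟩ := hσ c hc0
    have hfa := (val_directSum_lt_iff (ρ := ρ) (τ := τ) _).2 (hbefore a hac)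
    have hfb := (val_directSum_lt_iff (ρ := ρ) (τ := τ) (f b)).not.2 (hafter b hcb).not_gt
    exact (hfb ((Fin.lt_def.1 ((hfσ b a).1 hba)).trans hfa)).elim
  · rintro (h | h)
    · exact h.map (Fin.strictMono_castAdd r) (Fin.strictMono_castAdd r) directSum_castAdd
    · exact h.map (Fin.strictMono_natAdd ℓ) (Fin.strictMono_natAdd ℓ) directSum_natAdd

end DirectSum

section Structure

variable {n : ℕ} {π : Fin n → Fin n} {z : Fin n}

theorem contains_pat3412 {a b c d : Fin n} (hab : a < b) (hbc : b < c) (hcd : c < d)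
    (h₁ : π c < π d) (h₂ : π d < π a) (h₃ : π a < π b) : Contains π pat3412 := by
  refine ⟨![a, b, c, d], Fin.strictMono_iff_lt_succ.2 fun i => ?_, fun x y => ?_⟩
  · fin_cases i <;> simpa
  · fin_cases x <;> fin_cases y <;> simp [pat3412] <;> order

theorem contains_pat4231 {a b c d : Fin n} (hab : a < b) (hbc : b < c) (hcd : c < d)
    (h₁ : π d < π b) (h₂ : π b < π c) (h₃ : π c < π a) : Contains π pat4231 := by
  refine ⟨![a, b, c, d], Fin.strictMono_iff_lt_succ.2 fun i => ?_, fun x y => ?_⟩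
  · fin_cases i <;> simpa
  · fin_cases x <;> fin_cases y <;> simp [pat4231] <;> order

/-- Otherwise `z, i, π z, π i` is an occurrence of 3412. -/
theorem apply_lt_apply_of_lt_of_lt (hinv : Involutive π) (h3412 : Avoids π pat3412)
    {i : Fin n} (hzi : z < i) (hi : i < π z) : π i < π z := by
  rcases lt_trichotomy (π i) (π z) with h | h | h
  · exact h
  · exact absurd (hinv.injective h) hzi.ne'
  · refine (h3412 (contains_pat3412 hzi hi h ?_ ?_ h)).elim <;> simpa only [hinv _]

/-- An ascent at positions `z < i < j < π z` would extend to the 4231 `z, i, j, π z`. -/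
theorem strictAntiOn_Iic_apply_of_isBot (hinv : Involutive π) (h3412 : Avoids π pat3412)
    (h4231 : Avoids π pat4231) (hz : IsBot z) :
    StrictAntiOn π (Set.Iic (π z)) := by
  have happly_eq : ∀ {i}, π i = z ↔ i = π z :=
    ⟨fun h => by rw [← h, hinv], fun h => by rw [h, hinv]⟩
  intro i (hi : i ≤ π z) j (hj : j ≤ π z) hij
  rcases hj.eq_or_lt with rfl | hj
  · rw [hinv]
    exact (hz _).lt_of_ne fun h => hij.ne (happly_eq.1 h.symm)
  have hzj : z < j := (hz i).trans_lt hij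
  rcases (hz i).eq_or_lt with rfl | hzi
  · exact apply_lt_apply_of_lt_of_lt hinv h3412 hzj hj
  refine (lt_or_gt_of_ne fun h => hij.ne (hinv.injective h).symm).resolve_right fun hlt => ?_
  refine h4231 (contains_pat4231 hzi hij hj ?_ hlt
    (apply_lt_apply_of_lt_of_lt hinv h3412 hzj hj))
  rw [hinv]
  exact (hz _).lt_of_ne fun h => (hij.trans hj).ne (happly_eq.1 h.symm)

theorem exists_eq_directSum_rev {ℓ r : ℕ} {π : Fin (ℓ + r) → Fin (ℓ + r)} {z : Fin (ℓ + r)}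
    (hinv : Involutive π) (h3412 : Avoids π pat3412) (h4231 : Avoids π pat4231)
    (hz : IsBot z) (hℓ : (π z : ℕ) + 1 = ℓ) :
    ∃ τ : Fin r → Fin r, π = directSum Fin.rev τ := by
  have hanti := strictAntiOn_Iic_apply_of_isBot hinv h3412 h4231 hz
  have hmem : ∀ i : Fin ℓ, Fin.castAdd r i ∈ Set.Iic (π z) :=
    fun i => Fin.le_def.2 (by rw [Fin.val_castAdd]; omega)
  have hleft : ∀ i : Fin ℓ, (π (Fin.castAdd r i) : ℕ) < ℓ :=
    fun i => by have := Fin.le_def.1 (hanti.antitoneOn (hz _) (hmem i) (hz _)); omega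
  have hrev : ∀ i : Fin ℓ, π (Fin.castAdd r i) = Fin.castAdd r i.rev := by
    let ρ : Fin ℓ → Fin ℓ := fun i => (π (Fin.castAdd r i)).castLT (hleft i)
    have hρ : StrictAnti ρ :=
      fun i j hij => hanti (hmem i) (hmem j) (Fin.strictMono_castAdd r hij)
    intro i
    have hρi : ρ i = i.rev := by
      rw [← Fin.rev_rev (ρ i)]
      exact congrArg Fin.rev (congrFun (Fin.rev_strictAnti.comp hρ).eq_id i)
    exact Fin.ext (show (ρ i : ℕ) = i.rev from congrArg Fin.val hρi)
  have hright : ∀ j : Fin r, ℓ ≤ (π (Fin.natAdd ℓ j) : ℕ) := by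
    intro j
    by_contra! h
    have := congrArg Fin.val (hrev ((π (Fin.natAdd ℓ j)).castLT h))
    simp only [Fin.castAdd_castLT, hinv _, Fin.val_natAdd, Fin.val_castAdd, Fin.val_rev,
      Fin.val_castLT] at this
    omega
  have hlt : ∀ j : Fin r, (π (Fin.natAdd ℓ j) : ℕ) - ℓ < r :=
    fun j => by have := (π (Fin.natAdd ℓ j)).isLt; have := j.isLt; omega
  refine ⟨fun j => ⟨π (Fin.natAdd ℓ j) - ℓ, hlt j⟩, funext fun i => ?_⟩
  induction i using Fin.addCases with
  | left i => simp [hrev]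
  | right j =>
    ext
    simp only [directSum_natAdd, Fin.natAdd_mk]
    have := hright j
    omega

end Structure

section Counting

variable {k n ℓ r : ℕ}

/-- Membership in `I_n(3412, 4231, δ_{k+2})`. -/
def Admissible (k : ℕ) (π : Fin n → Fin n) : Prop :=
  Involutive π ∧ Avoids π pat3412 ∧ Avoids π pat4231 ∧
    Avoids π (Fin.rev : Fin (k + 2) → Fin (k + 2))

theorem admissible_directSum_rev_iff {τ : Fin r → Fin r} :
    Admissible k (directSum (Fin.rev : Fin ℓ → Fin ℓ) τ) ↔
      ℓ ≤ k + 1 ∧ Admissible k τ := by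
  have h3412 : ¬ Contains (Fin.rev : Fin ℓ → Fin ℓ) pat3412 :=
    fun h => not_strictAnti_pat3412 (h.strictAnti Fin.rev_strictAnti)
  have h4231 : ¬ Contains (Fin.rev : Fin ℓ → Fin ℓ) pat4231 :=
    fun h => not_strictAnti_pat4231 (h.strictAnti Fin.rev_strictAnti)
  simp only [Admissible, Avoids, involutive_directSum_iff, Fin.rev_involutive, true_and,
    contains_directSum_iff sumIndecomposable_pat3412,
    contains_directSum_iff sumIndecomposable_pat4231, contains_directSum_iff sumIndecomposable_rev,
    contains_rev_rev_iff, h3412, h4231, false_or,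
    not_or, not_le, show ℓ < k + 2 ↔ ℓ ≤ k + 1 by omega]
  tauto

theorem Admissible.val_apply_lt {π : Fin n → Fin n} {z : Fin n} (hπ : Admissible k π)
    (hz : IsBot z) : (π z : ℕ) < k + 1 := by
  obtain ⟨hinv, h3412, h4231, hrev⟩ := hπ
  by_contra! h
  have hanti := strictAntiOn_Iic_apply_of_isBot hinv h3412 h4231 hz
  have hlt : ∀ a : Fin (k + 2), (a : ℕ) < n := fun a => by have := (π z).isLt; omega
  have hmem : ∀ a : Fin (k + 2), (⟨a, hlt a⟩ : Fin n) ∈ Set.Iic (π z) :=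
    fun a => Fin.le_def.2 (by dsimp only; omega)
  exact hrev (contains_rev_of_strictAnti (f := fun a => ⟨a, hlt a⟩) (fun _ _ => id)
    fun a b hab => hanti (hmem a) (hmem b) hab)

theorem card_admissible_fiber {z : Fin n} (hz : IsBot z) (hℓ : 1 ≤ ℓ) (hℓk : ℓ ≤ k + 1)
    (hn : ℓ + r = n) :
    Nat.card {π : Fin n → Fin n // Admissible k π ∧ (π z : ℕ) + 1 = ℓ} =
      Nat.card {τ : Fin r → Fin r // Admissible k τ} := by
  subst hn
  have hz0 : z = Fin.castAdd r ⟨0, hℓ⟩ := le_antisymm (hz _) (Fin.le_def.2 (Nat.zero_le _))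
  let ι (τ : {τ : Fin r → Fin r // Admissible k τ}) :
      {π : Fin (ℓ + r) → Fin (ℓ + r) // Admissible k π ∧ (π z : ℕ) + 1 = ℓ} :=
    ⟨directSum Fin.rev τ.1, admissible_directSum_rev_iff.2 ⟨hℓk, τ.2⟩, by
      rw [hz0, directSum_castAdd]
      simp only [Fin.val_castAdd, Fin.val_rev, zero_add]
      omega⟩
  refine (Nat.card_congr (Equiv.ofBijective ι ⟨fun τ τ' h => ?_, fun ⟨π, hπ, hπz⟩ => ?_⟩)).symm
  · exact Subtype.ext (directSum_injective (congrArg Subtype.val h))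
  · obtain ⟨τ, rfl⟩ := exists_eq_directSum_rev hπ.1 hπ.2.1 hπ.2.2.1 hz hπz
    exact ⟨⟨τ, (admissible_directSum_rev_iff.1 hπ).2⟩, rfl⟩

theorem card_admissible_eq_sum {z : Fin n} (hz : IsBot z) :
    Nat.card {π : Fin n → Fin n // Admissible k π} =
      ∑ ℓ ∈ Icc 1 (min n (k + 1)),
        Nat.card {τ : Fin (n - ℓ) → Fin (n - ℓ) // Admissible k τ} := by
  rw [Nat.card_eq_sum_card_fiberwise (fun π => (π.1 z : ℕ) + 1)
    fun π => mem_Icc.2 ⟨Nat.le_add_left 1 _, le_min (π.1 z).isLt (π.2.val_apply_lt hz)⟩]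
  refine sum_congr rfl fun ℓ hℓ => ?_
  rw [mem_Icc, le_min_iff] at hℓ
  rw [← card_admissible_fiber hz hℓ.1 hℓ.2.2 (Nat.add_sub_cancel' hℓ.2.1)]
  exact Nat.card_congr
    (Equiv.subtypeSubtypeEquivSubtypeInter (Admissible k) fun π => (π z : ℕ) + 1 = ℓ)

theorem card_admissible_zero : Nat.card {π : Fin 0 → Fin 0 // Admissible k π} = 1 :=
  Nat.card_eq_one_iff_unique.2 ⟨inferInstance,
    ⟨id, fun _ => rfl, fun h => absurd h.le (by omega), fun h => absurd h.le (by omega),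
      fun h => absurd h.le (by omega)⟩⟩

end Counting

theorem stmt15_general (n k : ℕ) :
    Nat.card {π : Fin n → Fin n //
      Function.Involutive π ∧ Avoids π pat3412 ∧ Avoids π pat4231 ∧
        Avoids π (Fin.rev : Fin (k + 2) → Fin (k + 2))} =
    genFib (k + 1) (n + 1) := by
  show Nat.card {π : Fin n → Fin n // Admissible k π} = _
  induction n using Nat.strong_induction_on with
  | _ n ih =>
  rcases Nat.eq_zero_or_pos n with rfl | hn
  · rw [card_admissible_zero, genFib]
  rw [card_admissible_eq_sum (z := ⟨0, hn⟩) fun _ => Nat.zero_le _,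
    genFib_succ_eq_sum_Icc_min hn]
  refine sum_congr rfl fun ℓ hℓ => ?_
  rw [mem_Icc] at hℓ
  rw [ih (n - ℓ) (by omega)]
  congr 1
  omega

/-- for all `n ≥ 0` and `k ≥ 1`,
`|I_n(3412, 4231, (k+2)(k+1)…21)| = F_{k+1, n+1}`. -/
theorem stmt15 (n k : ℕ) (hk : 1 ≤ k) :
    Nat.card {π : Fin n → Fin n //
      Function.Involutive π ∧ Avoids π pat3412 ∧ Avoids π pat4231 ∧
        Avoids π (Fin.rev : Fin (k + 2) → Fin (k + 2))} =
    genFib (k + 1) (n + 1) :=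
  stmt15_general n k
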